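/- Let X = {s ∈ ℤ^ℕ : |sₙ| → ∞} and ψ(s) = t_s. Then X' := {s ∈ X : ψ(s) < ∞} is dense in X. More precisely, for any s ∈ X and n ∈ ℕ, the sequence sⁿ defined by sⁿ↾n = s↾n and sⁿ_k = k for k ≥ n lies in X, has t_{sⁿ} < ∞, and sⁿ → s in the product topology. -/

import Mathlib

open Filter Topology

/-- One step of the model dynamics `𝓕(t,s) = (eᵗ - 1 - 2π|s₁|, σ s)`. -/
noncomputable def step (p : ℝ × (ℕ → ℤ)) : ℝ × (ℕ → ℤ) :=
  (Real.exp p.1 - 1 - 2 * Real.pi * |(p.2 1 : ℝ)|, fun n => p.2 (n + 1))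

/-- `(t,s) ∈ J(𝓕)`: every iterate has nonnegative first coordinate. -/
noncomputable def inJ (t : ℝ) (s : ℕ → ℤ) : Prop := ∀ n : ℕ, 0 ≤ (step^[n] (t, s)).1

/-- `t_s = inf {t ≥ 0 : (t,s) ∈ J(𝓕)}`, with value `∞` if the set is empty. -/
noncomputable def tmin (s : ℕ → ℤ) : ENNReal := sInf (ENNReal.ofReal '' {t : ℝ | inJ t s})

/-- `X = {s ∈ ℤ^ℕ : |sₙ| → ∞}`. -/
def Xset : Set (ℕ → ℤ) := {s | Tendsto (fun n => |s n|) atTop atTop}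

/-!
If `|s_k| ≤ C (k + 1)`, the first coordinate of the orbit of `(2 + 42 C, s)` grows by at least
one per step: at height `t ≥ 2 + 42 C + k` we have `eᵗ - 1 ≥ t + t²/2`, and `t²/2` exceeds
`1 + 2π |s_{k+1}|` because `2π < 7` and `k ≤ t`. Hence `t_s ≤ 2 + 42 C`. The sequence
`sⁿ = modifyTail s n` grows linearly, and it agrees with `s` on `[0, n)`, so `sⁿ → s`.
-/
lemma step_iterate_snd (p : ℝ × (ℕ → ℤ)) (k : ℕ) :
    (step^[k] p).2 = fun m => p.2 (m + k) := by
  induction k with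
  | zero => rfl
  | succ k ih =>
    rw [Function.iterate_succ_apply', step, ih]
    funext m
    simp only [add_right_comm, add_assoc]

lemma add_one_le_step_fst {C : ℝ} (hC : 0 ≤ C) {k : ℕ} {p : ℝ × (ℕ → ℤ)}
    (hp : 2 + 42 * C + k ≤ p.1) (hs : |(p.2 1 : ℝ)| ≤ C * (k + 2)) :
    2 + 42 * C + (k + 1) ≤ (step p).1 := by
  have hk : (0 : ℝ) ≤ k := k.cast_nonneg
  have hexp : 1 + p.1 + p.1 ^ 2 / 2 ≤ Real.exp p.1 :=
    Real.quadratic_le_exp_of_nonneg (by linarith)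
  have hjump : 2 * Real.pi * |(p.2 1 : ℝ)| ≤ 7 * C * (p.1 + 2) := by
    calc 2 * Real.pi * |(p.2 1 : ℝ)| ≤ 7 * (C * (k + 2)) := by
          gcongr
          linarith [Real.pi_lt_d2]
      _ ≤ 7 * C * (p.1 + 2) := by nlinarith
  have hsq : 2 + 14 * C * (p.1 + 2) ≤ p.1 ^ 2 := by nlinarith
  simp only [step]
  linarith

lemma inJ_of_abs_le {C : ℝ} {s : ℕ → ℤ} (hs : ∀ k, |(s k : ℝ)| ≤ C * (k + 1)) :
    inJ (2 + 42 * C) s := by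
  have hC : 0 ≤ C := by simpa using (abs_nonneg _).trans (hs 0)
  have hclimb : ∀ k : ℕ, 2 + 42 * C + k ≤ (step^[k] (2 + 42 * C, s)).1 := by
    intro k
    induction k with
    | zero => simp
    | succ k ih =>
      rw [Function.iterate_succ_apply', Nat.cast_succ]
      refine add_one_le_step_fst hC ih ?_
      rw [step_iterate_snd]
      convert hs (1 + k) using 2
      push_cast
      ring
  intro k
  linarith [hclimb k, (k.cast_nonneg : (0 : ℝ) ≤ k)]

lemma tmin_le_of_inJ {t : ℝ} {s : ℕ → ℤ} (h : inJ t s) : tmin s ≤ ENNReal.ofReal t :=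
  sInf_le ⟨t, h, rfl⟩

lemma tmin_lt_top_of_abs_le {C : ℝ} {s : ℕ → ℤ}
    (hs : ∀ k, |(s k : ℝ)| ≤ C * (k + 1)) : tmin s < ⊤ :=
  (tmin_le_of_inJ (inJ_of_abs_le hs)).trans_lt ENNReal.ofReal_lt_top

def modifyTail (s : ℕ → ℤ) (n : ℕ) : ℕ → ℤ :=
  fun k => if k < n then s k else (k : ℤ)

lemma modifyTail_mem_Xset (s : ℕ → ℤ) (n : ℕ) : modifyTail s n ∈ Xset := by
  refine tendsto_atTop_mono' atTop ?_ tendsto_natCast_atTop_atTop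
  filter_upwards [eventually_ge_atTop n] with k hk
  simp only [modifyTail, if_neg (not_lt.mpr hk), le_abs_self]

lemma abs_modifyTail_le (s : ℕ → ℤ) (n k : ℕ) :
    |(modifyTail s n k : ℝ)| ≤ (∑ j ∈ Finset.range n, |(s j : ℝ)| + 1) * (k + 1) := by
  have hM : 0 ≤ ∑ j ∈ Finset.range n, |(s j : ℝ)| := by positivity
  have hk : (0 : ℝ) ≤ k := k.cast_nonneg
  unfold modifyTail
  split_ifs with hkn
  · have := Finset.single_le_sum (f := fun j => |(s j : ℝ)|) (fun _ _ => abs_nonneg _)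
      (Finset.mem_range.mpr hkn)
    nlinarith
  · rw [Int.cast_natCast, abs_of_nonneg hk]
    nlinarith

lemma tmin_modifyTail_lt_top (s : ℕ → ℤ) (n : ℕ) : tmin (modifyTail s n) < ⊤ :=
  tmin_lt_top_of_abs_le (abs_modifyTail_le s n)

lemma tendsto_modifyTail (s : ℕ → ℤ) : Tendsto (modifyTail s) atTop (𝓝 s) := by
  rw [tendsto_pi_nhds]
  intro k
  refine tendsto_const_nhds.congr' ?_
  filter_upwards [eventually_gt_atTop k] with n hn
  simp [modifyTail, hn]

theorem finite_tmin_dense_general (s : ℕ → ℤ) (n : ℕ) :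
    (fun k : ℕ => if k < n then s k else (k : ℤ)) ∈ Xset ∧
    tmin (fun k : ℕ => if k < n then s k else (k : ℤ)) < ⊤ ∧
    Tendsto (fun n : ℕ => (fun k : ℕ => if k < n then s k else (k : ℤ))) atTop (𝓝 s) ∧
    s ∈ closure {s' | s' ∈ Xset ∧ tmin s' < ⊤} := by
  have hdense : ∀ m, modifyTail s m ∈ {s' | s' ∈ Xset ∧ tmin s' < ⊤} := fun m =>
    ⟨modifyTail_mem_Xset s m, tmin_modifyTail_lt_top s m⟩
  exact ⟨modifyTail_mem_Xset s n, tmin_modifyTail_lt_top s n, tendsto_modifyTail s,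
    mem_closure_of_tendsto (tendsto_modifyTail s) (.of_forall hdense)⟩

/-- For `s ∈ X` and `n ∈ ℕ`, the modification `sⁿ` (agreeing with `s` below `n` and
equal to `k` at `k ≥ n`) lies in `X`, has `t_{sⁿ} < ∞`, and `sⁿ → s`; hence
`{s ∈ X : t_s < ∞}` is dense in `X`. -/
theorem finite_tmin_dense (s : ℕ → ℤ) (hs : s ∈ Xset) (n : ℕ) :
    (fun k : ℕ => if k < n then s k else (k : ℤ)) ∈ Xset ∧
    tmin (fun k : ℕ => if k < n then s k else (k : ℤ)) < ⊤ ∧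
    Tendsto (fun n : ℕ => (fun k : ℕ => if k < n then s k else (k : ℤ))) atTop (𝓝 s) ∧
    s ∈ closure {s' | s' ∈ Xset ∧ tmin s' < ⊤} :=
  finite_tmin_dense_general s n
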